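/- arXiv:1802.03877 — 2 statements merged into one kernel-verified Lean document; each statement's English description precedes it below -/
import Mathlib

section
/- For every real number z and every real number a > −4, 1/Φ(z) < √(2π(a+4)) · exp( (a+5)/(2(a+4)) · z² − a/(2(a+4)) ), where Φ is the cumulative distribution function of the standard normal distribution. -/
open MeasureTheory Real

/-- The standard normal cumulative distribution function. -/
noncomputable def stdNormalCDF (z : ℝ) : ℝ :=
  (Real.sqrt (2 * Real.pi))⁻¹ * ∫ t in Set.Iic z, Real.exp (-(t ^ 2) / 2)

/-!
With `u(t) = (t + √(t² + 4)) / 2` one has `u' = u / √(t² + 4) < u² = t u + 1`, hence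
`(e^{-t²/2} u)' < e^{-t²/2}`. Integrating over `(-∞, z]` gives Birnbaum's bound
`√(2π) Φ(z) > e^{-z²/2} u(z)`, so `1/Φ(z) < √(2π) e^{z²/2} / u(z) < √(2π) e^{z²/2} √(z² + 4)`.
The last factor is absorbed by `√c ≤ √b · exp (c / (2b) - 1/2)`, which is `x ≤ e^{x - 1}` at
`x = c / b`, taken with `b = a + 4` and `c = z² + 4`.
-/

open Set Filter Topology

lemma abs_lt_sqrt_sq_add_four (t : ℝ) : |t| < √(t ^ 2 + 4) := by
  rw [← sqrt_sq_eq_abs]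
  exact sqrt_lt_sqrt (sq_nonneg t) (by linarith)

lemma sqrt_sq_add_four_le (t : ℝ) : √(t ^ 2 + 4) ≤ |t| + 2 := by
  rw [sqrt_le_iff]
  constructor
  · positivity
  · nlinarith [sq_abs t, abs_nonneg t]

/-- Birnbaum's lower bound for `Φ(t) / φ(t)`, the positive root of `u ^ 2 = t * u + 1`. -/
noncomputable def birnbaumBound (t : ℝ) : ℝ := (t + √(t ^ 2 + 4)) / 2

section birnbaumBound

variable (t : ℝ)

lemma birnbaumBound_pos : 0 < birnbaumBound t := by
  have := abs_lt_sqrt_sq_add_four t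
  have := neg_abs_le t
  unfold birnbaumBound
  linarith

lemma birnbaumBound_lt_sqrt : birnbaumBound t < √(t ^ 2 + 4) := by
  have := abs_lt_sqrt_sq_add_four t
  have := le_abs_self t
  unfold birnbaumBound
  linarith

lemma birnbaumBound_sq : birnbaumBound t ^ 2 = t * birnbaumBound t + 1 := by
  have := sq_sqrt (show 0 ≤ t ^ 2 + 4 by positivity)
  unfold birnbaumBound
  linear_combination this / 4

lemma one_lt_birnbaumBound_mul_sqrt : 1 < birnbaumBound t * √(t ^ 2 + 4) := by
  have hsq := sq_sqrt (show 0 ≤ t ^ 2 + 4 by positivity)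
  have hpos := birnbaumBound_pos t
  unfold birnbaumBound at hpos ⊢
  nlinarith [mul_pos hpos hpos]

lemma birnbaumBound_le_abs_add_one : birnbaumBound t ≤ |t| + 1 := by
  have := sqrt_sq_add_four_le t
  have := le_abs_self t
  unfold birnbaumBound
  linarith

lemma hasDerivAt_birnbaumBound :
    HasDerivAt birnbaumBound (birnbaumBound t / √(t ^ 2 + 4)) t := by
  have hs : 0 < √(t ^ 2 + 4) := by positivity
  have hsqrt := (hasDerivAt_sqrt (x := t ^ 2 + 4) (by positivity)).comp t
    (((hasDerivAt_id t).pow 2).add_const 4)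
  refine (((hasDerivAt_id t).add hsqrt).div_const 2).congr_deriv ?_
  simp only [id, birnbaumBound]
  field_simp
  ring

lemma birnbaumBound_div_sqrt_sub_mul_lt_one :
    birnbaumBound t / √(t ^ 2 + 4) - t * birnbaumBound t < 1 := by
  have hs : 0 < √(t ^ 2 + 4) := by positivity
  have := one_lt_birnbaumBound_mul_sqrt t
  have := birnbaumBound_sq t
  rw [div_sub' hs.ne', div_lt_one hs]
  nlinarith [birnbaumBound_pos t]

end birnbaumBound

lemma birnbaumBound_le_one {t : ℝ} (ht : t ≤ 0) : birnbaumBound t ≤ 1 := by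
  have : √(t ^ 2 + 4) ≤ 2 - t := by
    rw [sqrt_le_iff]
    constructor <;> nlinarith
  unfold birnbaumBound
  linarith

lemma hasDerivAt_exp_mul_birnbaumBound (t : ℝ) :
    HasDerivAt (fun t ↦ exp (-(t ^ 2) / 2) * birnbaumBound t)
      (exp (-(t ^ 2) / 2) * (birnbaumBound t / √(t ^ 2 + 4) - t * birnbaumBound t)) t := by
  have hexp := (((hasDerivAt_id t).pow 2).neg.div_const 2).exp
  refine (hexp.mul (hasDerivAt_birnbaumBound t)).congr_deriv ?_
  simp only [id, Pi.neg_apply, Pi.pow_apply]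
  ring

lemma integrable_one_add_sq_mul_exp_neg_sq_div_two :
    Integrable fun t : ℝ ↦ (1 + t ^ 2) * exp (-(t ^ 2) / 2) := by
  have h0 := integrable_exp_neg_mul_sq (b := 1 / 2) (by norm_num)
  have h2 := integrable_rpow_mul_exp_neg_mul_sq (b := 1 / 2) (s := 2) (by norm_num) (by norm_num)
  refine (h0.add h2).congr (Eventually.of_forall fun t ↦ ?_)
  simp only [Pi.add_apply, rpow_two]
  ring_nf

lemma integrable_exp_mul_deriv_birnbaumBound :
    Integrable fun t ↦
      exp (-(t ^ 2) / 2) * (birnbaumBound t / √(t ^ 2 + 4) - t * birnbaumBound t) := by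
  refine (integrable_one_add_sq_mul_exp_neg_sq_div_two.const_mul 2).mono' ?_
    (Eventually.of_forall fun t ↦ ?_)
  · have := (continuous_iff_continuousAt.2 fun t ↦
      (hasDerivAt_birnbaumBound t).continuousAt).measurable
    fun_prop
  have hs : 0 < √(t ^ 2 + 4) := by positivity
  have hdiv : birnbaumBound t / √(t ^ 2 + 4) ≤ 1 :=
    (div_le_one hs).2 (birnbaumBound_lt_sqrt t).le
  have hmul : |t * birnbaumBound t| ≤ |t| * (|t| + 1) := by
    rw [abs_mul, abs_of_pos (birnbaumBound_pos t)]
    exact mul_le_mul_of_nonneg_left (birnbaumBound_le_abs_add_one t) (abs_nonneg t)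
  have hfactor : |birnbaumBound t / √(t ^ 2 + 4) - t * birnbaumBound t| ≤ 2 * (1 + t ^ 2) := by
    have := abs_sub (birnbaumBound t / √(t ^ 2 + 4)) (t * birnbaumBound t)
    rw [abs_of_pos (div_pos (birnbaumBound_pos t) hs)] at this
    nlinarith [abs_nonneg t, sq_abs t]
  rw [norm_mul, norm_of_nonneg (exp_pos _).le, norm_eq_abs]
  nlinarith [exp_pos (-(t ^ 2) / 2)]

lemma tendsto_exp_mul_birnbaumBound_atBot :
    Tendsto (fun t ↦ exp (-(t ^ 2) / 2) * birnbaumBound t) atBot (𝓝 0) := by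
  have hsq : Tendsto (fun t : ℝ ↦ -(t ^ 2) / 2) atBot atBot := by
    have := (tendsto_pow_atTop (α := ℝ) two_ne_zero).comp tendsto_neg_atBot_atTop
    simp only [Function.comp_def, even_two.neg_pow] at this
    exact (tendsto_neg_atTop_atBot.comp this).atBot_div_const two_pos
  refine squeeze_zero' (Eventually.of_forall fun t ↦ by positivity [birnbaumBound_pos t]) ?_
    (tendsto_exp_atBot.comp hsq)
  filter_upwards [eventually_le_atBot 0] with t ht
  exact mul_le_of_le_one_right (exp_pos _).le (birnbaumBound_le_one ht)

theorem exp_mul_birnbaumBound_lt_integral_Iic (z : ℝ) :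
    exp (-(z ^ 2) / 2) * birnbaumBound z < ∫ t in Iic z, exp (-(t ^ 2) / 2) := by
  have hgauss : Integrable fun t : ℝ ↦ exp (-(t ^ 2) / 2) := by
    simpa [neg_div, div_eq_inv_mul] using integrable_exp_neg_mul_sq (b := 1 / 2) (by norm_num)
  have hFTC := integral_Iic_of_hasDerivAt_of_tendsto' (a := z)
    (fun t _ ↦ hasDerivAt_exp_mul_birnbaumBound t)
    integrable_exp_mul_deriv_birnbaumBound.integrableOn tendsto_exp_mul_birnbaumBound_atBot
  have hgap : ∀ t : ℝ, 0 < exp (-(t ^ 2) / 2) -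
      exp (-(t ^ 2) / 2) * (birnbaumBound t / √(t ^ 2 + 4) - t * birnbaumBound t) := fun t ↦ by
    have := birnbaumBound_div_sqrt_sub_mul_lt_one t
    nlinarith [exp_pos (-(t ^ 2) / 2)]
  have hpos : 0 < ∫ t in Iic z, (exp (-(t ^ 2) / 2) -
      exp (-(t ^ 2) / 2) * (birnbaumBound t / √(t ^ 2 + 4) - t * birnbaumBound t)) := by
    rw [setIntegral_pos_iff_support_of_nonneg_ae (ae_of_all _ fun t ↦ (hgap t).le)
      (hgauss.sub integrable_exp_mul_deriv_birnbaumBound).integrableOn,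
      Function.support_eq_univ fun t ↦ (hgap t).ne']
    simp
  rw [integral_sub hgauss.integrableOn integrable_exp_mul_deriv_birnbaumBound.integrableOn,
    hFTC, sub_zero] at hpos
  linarith

lemma sqrt_le_sqrt_mul_exp {b : ℝ} (hb : 0 < b) (c : ℝ) :
    √c ≤ √b * exp (c / (2 * b) - 1 / 2) := by
  have hexp : c ≤ b * exp (c / (2 * b) - 1 / 2) ^ 2 := by
    have hdouble : c / (2 * b) - 1 / 2 + (c / (2 * b) - 1 / 2) = c / b - 1 := by ring
    rw [sq, ← exp_add, hdouble, ← div_le_iff₀' hb]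
    linarith [add_one_le_exp (c / b - 1)]
  calc √c ≤ √(b * exp (c / (2 * b) - 1 / 2) ^ 2) := sqrt_le_sqrt hexp
    _ = √b * exp (c / (2 * b) - 1 / 2) := by rw [sqrt_mul hb.le, sqrt_sq (exp_pos _).le]

/-- For every real `z` and every `a > -4`,
`1/Φ(z) < √(2π(a+4)) · exp((a+5)/(2(a+4)) · z² − a/(2(a+4)))`. -/
theorem stmt_3 (z a : ℝ) (ha : -4 < a) :
    1 / stdNormalCDF z <
      Real.sqrt (2 * Real.pi * (a + 4)) *
        Real.exp ((a + 5) / (2 * (a + 4)) * z ^ 2 - a / (2 * (a + 4))) := by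
  have hb : 0 < a + 4 := by linarith
  have hu := birnbaumBound_pos z
  have hΦ : (√(2 * π))⁻¹ * (exp (-(z ^ 2) / 2) * birnbaumBound z) < stdNormalCDF z :=
    mul_lt_mul_of_pos_left (exp_mul_birnbaumBound_lt_integral_Iic z) (by positivity)
  have hinv : 1 / birnbaumBound z < √(z ^ 2 + 4) := by
    rw [div_lt_iff₀ hu, mul_comm]
    exact one_lt_birnbaumBound_mul_sqrt z
  calc 1 / stdNormalCDF z
      < 1 / ((√(2 * π))⁻¹ * (exp (-(z ^ 2) / 2) * birnbaumBound z)) :=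
        one_div_lt_one_div_of_lt (by positivity) hΦ
    _ = √(2 * π) * exp (z ^ 2 / 2) * (1 / birnbaumBound z) := by
        rw [neg_div, exp_neg]; field_simp
    _ < √(2 * π) * exp (z ^ 2 / 2) * √(z ^ 2 + 4) := by gcongr
    _ ≤ √(2 * π) * exp (z ^ 2 / 2) * (√(a + 4) * exp ((z ^ 2 + 4) / (2 * (a + 4)) - 1 / 2)) := by
        gcongr
        exact sqrt_le_sqrt_mul_exp hb _
    _ = _ := by
        rw [sqrt_mul (by positivity : (0 : ℝ) ≤ 2 * π) (a + 4), mul_mul_mul_comm, ← exp_add]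
        congr 2
        field_simp
        ring
end

section
/- (Komatu's inequality, used in the paper.) For every real number z ≤ 0, Φ(z) > 2·φ(z) / ( √(z²+4) − z ), where Φ is the standard normal CDF and φ(z) = (1/√(2π))·exp(−z²/2) is the standard normal density. -/
/-!
Write `s = √(z² + 4)`. The gap `Φ(z) - 2φ(z)/(s - z)` tends to `0` as `z → -∞`, since both
terms do, and it is strictly increasing: using `φ' = -zφ` and `s² = z² + 4`, its derivative
simplifies to `2φ(z)(s + z)/(s(s - z)²)`, which is positive because `s > |z|`.
Hence the gap is positive everywhere.
-/

open MeasureTheory Real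

/-- The standard normal probability density function. -/
noncomputable def stdNormalPDF (z : ℝ) : ℝ :=
  (Real.sqrt (2 * Real.pi))⁻¹ * Real.exp (-(z ^ 2) / 2)

open Filter Set Topology

theorem hasDerivAt_integral_Iic {E : Type*} [NormedAddCommGroup E] [NormedSpace ℝ E]
    [CompleteSpace E] {f : ℝ → E} (hf : Continuous f) (hfi : Integrable f) (x : ℝ) :
    HasDerivAt (fun z => ∫ t in Iic z, f t) (f x) x := by
  have hsplit : (fun z => ∫ t in Iic z, f t) =
      fun z => (∫ t in Iic 0, f t) + ∫ t in (0 : ℝ)..z, f t := funext fun z => by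
    rw [← intervalIntegral.integral_Iic_sub_Iic hfi.integrableOn hfi.integrableOn]
    abel
  rw [hsplit]
  exact (intervalIntegral.integral_hasDerivAt_right hfi.intervalIntegrable
    (hf.stronglyMeasurableAtFilter _ _) hf.continuousAt).const_add _

theorem integrable_exp_neg_sq_div_two : Integrable fun t : ℝ => exp (-(t ^ 2) / 2) := by
  convert integrable_exp_neg_mul_sq (show (0 : ℝ) < 1 / 2 by norm_num) using 3
  ring

theorem stdNormalPDF_pos (x : ℝ) : 0 < stdNormalPDF x := by
  unfold stdNormalPDF
  have := pi_pos
  positivity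

theorem hasDerivAt_stdNormalCDF (x : ℝ) : HasDerivAt stdNormalCDF (stdNormalPDF x) x :=
  (hasDerivAt_integral_Iic (by fun_prop) integrable_exp_neg_sq_div_two x).const_mul _

theorem hasDerivAt_stdNormalPDF (x : ℝ) : HasDerivAt stdNormalPDF (-x * stdNormalPDF x) x := by
  have hexponent : HasDerivAt (fun y : ℝ => -(y ^ 2) / 2) (-x) x :=
    ((hasDerivAt_pow 2 x).neg.div_const 2).congr_deriv (by ring)
  show HasDerivAt (fun y => (√(2 * π))⁻¹ * exp (-(y ^ 2) / 2)) _ x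
  exact (hexponent.exp.const_mul _).congr_deriv (by unfold stdNormalPDF; ring)

theorem tendsto_stdNormalCDF_atBot : Tendsto stdNormalCDF atBot (𝓝 0) := by
  have := (tendsto_integral_Iic_zero (f := fun t : ℝ => exp (-(t ^ 2) / 2))
    (μ := volume) tendsto_id).const_mul (√(2 * π))⁻¹
  rw [mul_zero] at this
  exact this

theorem tendsto_stdNormalPDF_atBot : Tendsto stdNormalPDF atBot (𝓝 0) := by
  have hsq : Tendsto (fun x : ℝ => x ^ 2) atBot atTop :=
    ((tendsto_pow_atTop two_ne_zero).comp tendsto_neg_atBot_atTop).congr fun x => neg_sq x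
  have := (tendsto_exp_atBot.comp
    ((tendsto_neg_atTop_atBot.comp hsq).atBot_div_const two_pos)).const_mul (√(2 * π))⁻¹
  rw [mul_zero] at this
  exact this

theorem abs_lt_sqrt_sq_add {c : ℝ} (hc : 0 < c) (x : ℝ) : |x| < √(x ^ 2 + c) := by
  rw [← sqrt_sq_eq_abs]
  exact sqrt_lt_sqrt (sq_nonneg x) (lt_add_of_pos_right _ hc)

theorem sqrt_sq_add_four_sub_pos (x : ℝ) : 0 < √(x ^ 2 + 4) - x := by
  linarith [le_abs_self x, abs_lt_sqrt_sq_add four_pos x]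

noncomputable def komatuGap (z : ℝ) : ℝ :=
  stdNormalCDF z - 2 * stdNormalPDF z / (√(z ^ 2 + 4) - z)

theorem hasDerivAt_komatuGap (x : ℝ) :
    HasDerivAt komatuGap
      (2 * stdNormalPDF x * (√(x ^ 2 + 4) + x) / (√(x ^ 2 + 4) * (√(x ^ 2 + 4) - x) ^ 2)) x := by
  have hs : √(x ^ 2 + 4) ^ 2 = x ^ 2 + 4 := sq_sqrt (by positivity)
  have hsx : √(x ^ 2 + 4) - x ≠ 0 := (sqrt_sq_add_four_sub_pos x).ne'
  have hden : HasDerivAt (fun y : ℝ => √(y ^ 2 + 4) - y) (2 * x / (2 * √(x ^ 2 + 4)) - 1) x :=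
    (((hasDerivAt_pow 2 x).add_const 4).sqrt (by positivity)).sub (hasDerivAt_id' x) |>.congr_deriv
      (by push_cast; ring)
  refine ((hasDerivAt_stdNormalCDF x).sub
    (((hasDerivAt_stdNormalPDF x).const_mul 2).div hden hsx)).congr_deriv ?_
  field_simp
  linear_combination stdNormalPDF x * √(x ^ 2 + 4) * hs

theorem komatuGap_strictMono : StrictMono komatuGap := by
  refine strictMono_of_deriv_pos fun x => ?_
  rw [(hasDerivAt_komatuGap x).deriv]
  have hsum : 0 < √(x ^ 2 + 4) + x := by linarith [neg_abs_le x, abs_lt_sqrt_sq_add four_pos x]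
  have := stdNormalPDF_pos x
  have := sqrt_sq_add_four_sub_pos x
  positivity

theorem tendsto_komatuGap_atBot : Tendsto komatuGap atBot (𝓝 0) := by
  have hden : Tendsto (fun x : ℝ => √(x ^ 2 + 4) - x) atBot atTop :=
    tendsto_atTop_mono (fun x => by linarith [sqrt_nonneg (x ^ 2 + 4)]) tendsto_neg_atBot_atTop
  have := tendsto_stdNormalCDF_atBot.sub
    ((tendsto_stdNormalPDF_atBot.const_mul 2).div_atTop hden)
  rw [sub_zero] at this
  exact this

theorem komatuGap_pos (z : ℝ) : 0 < komatuGap z :=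
  have hle : 0 ≤ komatuGap (z - 1) :=
    le_of_tendsto tendsto_komatuGap_atBot <| by
      filter_upwards [eventually_le_atBot (z - 1)] with t ht
      exact komatuGap_strictMono.monotone ht
  hle.trans_lt (komatuGap_strictMono (sub_one_lt z))

theorem stmt_4_general (z : ℝ) :
    2 * stdNormalPDF z / (Real.sqrt (z ^ 2 + 4) - z) < stdNormalCDF z :=
  sub_pos.mp (komatuGap_pos z)

/-- Komatu's inequality: for every `z ≤ 0`, `Φ(z) > 2·φ(z)/(√(z²+4) − z)`. -/
theorem stmt_4 (z : ℝ) (hz : z ≤ 0) :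
    2 * stdNormalPDF z / (Real.sqrt (z ^ 2 + 4) - z) < stdNormalCDF z :=
  stmt_4_general z
end
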